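/- The function H satisfies H(r) → 0 as r → 0⁺ and H(r) → 1 as r → 1⁻; in particular, setting H(0) = 0 and H(1) = 1 makes H continuous on [0,1]. -/

import Mathlib

open Real Set Filter

/-- Complete elliptic integral of the first kind. -/
noncomputable def K (r : ℝ) : ℝ :=
  ∫ θ in (0:ℝ)..(π/2), 1 / Real.sqrt (1 - r^2 * Real.sin θ ^ 2)

/-- Complete elliptic integral of the second kind. -/
noncomputable def E (r : ℝ) : ℝ :=
  ∫ θ in (0:ℝ)..(π/2), Real.sqrt (1 - r^2 * Real.sin θ ^ 2)

/-- Complementary complete elliptic integral of the first kind: `K'(r) = K(√(1-r²))`. -/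
noncomputable def K' (r : ℝ) : ℝ := K (Real.sqrt (1 - r^2))

/-- Complementary complete elliptic integral of the second kind: `E'(r) = E(√(1-r²))`. -/
noncomputable def E' (r : ℝ) : ℝ := E (Real.sqrt (1 - r^2))

/-- The special function `m(r) = (2/π) r'² K(r) K'(r)` (here `r'² = 1 - r²`). -/
noncomputable def m (r : ℝ) : ℝ := (2/π) * (1 - r^2) * K r * K' r

/-- The function `H` from Remark 2.4. -/
noncomputable def H (r : ℝ) : ℝ :=
  (1 / (1 + π * m r / (4 * E' r * K r - π))) *
    (1 + 8 * (K r * K' r * (E r * E' r + r^2 * K r * K' r - K r * E' r) /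
      (4 * E' r * K r - π)^2))

/-- The extension of `H` to `[0,1]` with `H(0) = 0` and `H(1) = 1`. -/
noncomputable def Hext (r : ℝ) : ℝ :=
  if r = 0 then 0 else if r = 1 then 1 else H r

/-! Write `r' = √(1 - r²)`. As `r → 0⁺`: `K, E → π/2`, `E' → 1`, `K' → ∞` and `r K' → 0`;
as `r → 1⁻` the roles swap. So `π m / (4 E' K - π)` tends to `∞` at `0` and to `0` at `1`, while the correction
`8 K K' (E E' + r² K K' - K E') / (4 E' K - π)²` vanishes at both ends: at `0` because
`E E' + r² K K' - K E' = E' (E - K) + r² K K'` with `r'² K ≤ E ≤ K`, at `1` because `K → ∞`.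
`K → ∞` follows from `√(1 - r² sin² θ) ≤ r' + π/2 - θ`, which gives `K ≥ log ((r' + π/2) / r')`, and
`r' K → 0` is dominated convergence, the integrand `r' / √(1 - r² sin² θ)` being bounded by `1`. -/

open MeasureTheory intervalIntegral Topology

lemma sq_mul_sin_sq_le (r θ : ℝ) : r ^ 2 * sin θ ^ 2 ≤ r ^ 2 :=
  mul_le_of_le_one_right (sq_nonneg r) (sin_sq_le_one θ)

lemma one_sub_sq_mul_sin_sq_pos {r : ℝ} (hr : r ^ 2 < 1) (θ : ℝ) :
    0 < 1 - r ^ 2 * sin θ ^ 2 := by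
  linarith [sq_mul_sin_sq_le r θ]

lemma continuous_K_integrand {r : ℝ} (hr : r ^ 2 < 1) :
    Continuous fun θ => 1 / √(1 - r ^ 2 * sin θ ^ 2) :=
  continuous_const.div (by fun_prop) fun θ => (sqrt_pos.2 (one_sub_sq_mul_sin_sq_pos hr θ)).ne'

lemma intervalIntegrable_K_integrand {r : ℝ} (hr : r ^ 2 < 1) (a b : ℝ) :
    IntervalIntegrable (fun θ => 1 / √(1 - r ^ 2 * sin θ ^ 2)) volume a b :=
  (continuous_K_integrand hr).intervalIntegrable a b

lemma intervalIntegrable_E_integrand (r a b : ℝ) :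
    IntervalIntegrable (fun θ => √(1 - r ^ 2 * sin θ ^ 2)) volume a b :=
  (by fun_prop : Continuous fun θ => √(1 - r ^ 2 * sin θ ^ 2)).intervalIntegrable a b

lemma continuousOn_K : ContinuousOn K (Ioo (-1) 1) := by
  rw [continuousOn_iff_continuous_domRestrict]
  refine continuous_parametric_intervalIntegral_of_continuous'
    (f := fun (r : Ioo (-1 : ℝ) 1) θ => 1 / √(1 - (r : ℝ) ^ 2 * sin θ ^ 2)) ?_ 0 (π / 2)
  refine continuous_const.div (by fun_prop) fun ⟨r, θ⟩ => (sqrt_pos.2 ?_).ne'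
  exact one_sub_sq_mul_sin_sq_pos ((sq_lt_one_iff_abs_lt_one _).2 (abs_lt.2 r.2)) θ

lemma continuous_E : Continuous E :=
  continuous_parametric_intervalIntegral_of_continuous'
    (f := fun r θ => √(1 - r ^ 2 * sin θ ^ 2)) (by fun_prop) 0 (π / 2)

lemma K_zero : K 0 = π / 2 := by simp [K]

lemma E_zero : E 0 = π / 2 := by simp [E]

lemma E_one : E 1 = 1 := by
  have h : EqOn (fun θ => √(1 - 1 ^ 2 * sin θ ^ 2)) cos (uIcc 0 (π / 2)) := by
    intro θ hθ
    rw [uIcc_of_le pi_div_two_pos.le] at hθ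
    have hcos : 0 ≤ cos θ := cos_nonneg_of_mem_Icc ⟨by linarith [pi_pos, hθ.1], hθ.2⟩
    simp only [one_pow, one_mul, ← cos_sq', sqrt_sq hcos]
  rw [E, integral_congr h, integral_cos]
  simp

lemma K_mono {r s : ℝ} (hrs : r ^ 2 ≤ s ^ 2) (hs : s ^ 2 < 1) : K r ≤ K s := by
  refine integral_mono_on pi_div_two_pos.le (intervalIntegrable_K_integrand (hrs.trans_lt hs) _ _)
    (intervalIntegrable_K_integrand hs _ _) fun θ _ => ?_
  have hpos := one_sub_sq_mul_sin_sq_pos hs θ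
  gcongr

lemma E_anti {r s : ℝ} (hrs : r ^ 2 ≤ s ^ 2) : E s ≤ E r := by
  refine integral_mono_on pi_div_two_pos.le (intervalIntegrable_E_integrand _ _ _)
    (intervalIntegrable_E_integrand _ _ _) fun θ _ => ?_
  gcongr

lemma pi_div_two_le_K {r : ℝ} (hr : r ^ 2 < 1) : π / 2 ≤ K r :=
  K_zero ▸ K_mono (by simp [sq_nonneg]) hr

lemma one_le_E {r : ℝ} (hr : r ^ 2 ≤ 1) : 1 ≤ E r :=
  E_one ▸ E_anti (by simpa using hr)

lemma E_le_K {r : ℝ} (hr : r ^ 2 < 1) : E r ≤ K r := by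
  refine integral_mono_on pi_div_two_pos.le (intervalIntegrable_E_integrand _ _ _)
    (intervalIntegrable_K_integrand hr _ _) fun θ _ => ?_
  have hpos := sqrt_pos.2 (one_sub_sq_mul_sin_sq_pos hr θ)
  rw [le_div_iff₀ hpos, mul_self_sqrt (one_sub_sq_mul_sin_sq_pos hr θ).le]
  nlinarith [sq_nonneg r, sq_nonneg (sin θ)]

lemma one_sub_sq_mul_K_le_E {r : ℝ} (hr : r ^ 2 < 1) : (1 - r ^ 2) * K r ≤ E r := by
  rw [K, ← intervalIntegral.integral_const_mul]
  refine integral_mono_on pi_div_two_pos.le ((intervalIntegrable_K_integrand hr _ _).const_mul _)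
    (intervalIntegrable_E_integrand _ _ _) fun θ _ => ?_
  have hpos := one_sub_sq_mul_sin_sq_pos hr θ
  rw [mul_one_div, div_le_iff₀ (sqrt_pos.2 hpos), mul_self_sqrt hpos.le]
  linarith [sq_mul_sin_sq_le r θ]

lemma sq_lt_one_of_mem_Ioo {r : ℝ} (hr : r ∈ Ioo (0 : ℝ) 1) : r ^ 2 < 1 := by
  nlinarith [hr.1, hr.2]

lemma sqrt_one_sub_sq_mem_Ioo {r : ℝ} (hr : r ∈ Ioo (0 : ℝ) 1) : √(1 - r ^ 2) ∈ Ioo (0 : ℝ) 1 := by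
  have h0 : 0 < r ^ 2 := pow_pos hr.1 2
  have h1 := sq_lt_one_of_mem_Ioo hr
  exact ⟨sqrt_pos.2 (by linarith), (sqrt_lt' one_pos).2 (by linarith)⟩

lemma sqrt_one_sub_sq_sqrt_one_sub_sq {r : ℝ} (hr : r ∈ Ioo (0 : ℝ) 1) :
    √(1 - √(1 - r ^ 2) ^ 2) = r := by
  rw [sq_sqrt (sub_nonneg.2 (sq_lt_one_of_mem_Ioo hr).le), sub_sub_cancel, sqrt_sq hr.1.le]

lemma tendsto_sqrt_one_sub_sq_nhdsGT_zero :
    Tendsto (fun r : ℝ => √(1 - r ^ 2)) (𝓝[>] 0) (𝓝[<] 1) := by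
  refine tendsto_nhdsWithin_iff.2 ⟨?_, ?_⟩
  · exact tendsto_nhdsWithin_of_tendsto_nhds (by simpa using
      (((continuous_const (y := (1 : ℝ))).sub (continuous_pow 2)).sqrt.tendsto (0 : ℝ)))
  · filter_upwards [Ioo_mem_nhdsGT one_pos] with r hr using (sqrt_one_sub_sq_mem_Ioo hr).2

lemma tendsto_sqrt_one_sub_sq_nhdsLT_one :
    Tendsto (fun r : ℝ => √(1 - r ^ 2)) (𝓝[<] 1) (𝓝[>] 0) := by
  refine tendsto_nhdsWithin_iff.2 ⟨?_, ?_⟩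
  · exact tendsto_nhdsWithin_of_tendsto_nhds (by simpa using
      (((continuous_const (y := (1 : ℝ))).sub (continuous_pow 2)).sqrt.tendsto (1 : ℝ)))
  · filter_upwards [Ioo_mem_nhdsLT one_pos] with r hr using (sqrt_one_sub_sq_mem_Ioo hr).1

lemma tendsto_K_nhds_zero : Tendsto K (𝓝 0) (𝓝 (π / 2)) :=
  K_zero ▸ (continuousOn_K.continuousAt (Ioo_mem_nhds (by norm_num) one_pos)).tendsto

lemma integral_one_div_add_sub {b : ℝ} (hb : 0 < b) :
    ∫ θ in (0 : ℝ)..π / 2, 1 / (b + π / 2 - θ) = log (b + π / 2) - log b := by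
  simp only [one_div]
  rw [integral_comp_sub_left (fun x => x⁻¹), add_sub_cancel_right, sub_zero,
    integral_inv_of_pos hb (by positivity), log_div (by positivity) hb.ne']

lemma log_le_K {r : ℝ} (hr : r ∈ Ioo (0 : ℝ) 1) :
    log (√(1 - r ^ 2) + π / 2) - log √(1 - r ^ 2) ≤ K r := by
  set b := √(1 - r ^ 2)
  have hb := (sqrt_one_sub_sq_mem_Ioo hr).1
  have hr1 := sq_lt_one_of_mem_Ioo hr
  rw [← integral_one_div_add_sub hb]
  refine integral_mono_on pi_div_two_pos.le ?_ (intervalIntegrable_K_integrand hr1 _ _)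
    fun θ hθ => ?_
  · refine ContinuousOn.intervalIntegrable (continuousOn_const.div (by fun_prop) fun θ hθ => ?_)
    rw [uIcc_of_le pi_div_two_pos.le] at hθ
    linarith [hθ.2]
  have hcos : 0 ≤ cos θ := cos_nonneg_of_mem_Icc ⟨by linarith [pi_pos, hθ.1], hθ.2⟩
  have hcos_le : cos θ ≤ π / 2 - θ := by
    rw [← sin_pi_div_two_sub]; exact sin_le (by linarith [hθ.2])
  have hb2 : b ^ 2 = 1 - r ^ 2 := sq_sqrt (by linarith)
  have hpos := one_sub_sq_mul_sin_sq_pos hr1 θ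
  gcongr
  rw [sqrt_le_left (by linarith [hθ.2])]
  nlinarith [sin_sq_add_cos_sq θ, sin_sq_le_one θ, mul_nonneg hb.le hcos]

lemma tendsto_K_nhdsLT_one : Tendsto K (𝓝[<] 1) atTop := by
  have hlog : Tendsto (fun r : ℝ => log (π / 2) - log √(1 - r ^ 2)) (𝓝[<] 1) atTop :=
    tendsto_atTop_add_const_left _ _ <| tendsto_neg_atBot_atTop.comp
      (tendsto_log_nhdsGT_zero.comp tendsto_sqrt_one_sub_sq_nhdsLT_one)
  refine tendsto_atTop_mono' _ ?_ hlog
  filter_upwards [Ioo_mem_nhdsLT one_pos] with r hr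
  have hb := (sqrt_one_sub_sq_mem_Ioo hr).1
  have := log_le_log (by positivity) (le_add_of_nonneg_left hb.le : π / 2 ≤ √(1 - r ^ 2) + π / 2)
  linarith [log_le_K hr]

lemma tendsto_sqrt_one_sub_sq_mul_K : Tendsto (fun r => √(1 - r ^ 2) * K r) (𝓝[<] 1) (𝓝 0) := by
  have h := tendsto_integral_filter_of_dominated_convergence (μ := volume) (a := 0) (b := π / 2)
    (F := fun r θ => √(1 - r ^ 2) * (1 / √(1 - r ^ 2 * sin θ ^ 2))) (f := fun _ => 0)
    (l := 𝓝[<] 1) (fun _ => 1) ?_ ?_ intervalIntegrable_const ?_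
  · simpa [K, intervalIntegral.integral_const_mul] using h
  · filter_upwards [Ioo_mem_nhdsLT one_pos] with r hr
    exact ((continuous_K_integrand (sq_lt_one_of_mem_Ioo hr)).const_mul _).aestronglyMeasurable
  · filter_upwards [Ioo_mem_nhdsLT one_pos] with r hr
    refine .of_forall fun θ _ => ?_
    have hpos := one_sub_sq_mul_sin_sq_pos (sq_lt_one_of_mem_Ioo hr) θ
    rw [norm_of_nonneg (by positivity), mul_one_div, div_le_one (sqrt_pos.2 hpos)]
    exact sqrt_le_sqrt (by linarith [sq_mul_sin_sq_le r θ])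
  · filter_upwards [Measure.ae_ne volume (π / 2)] with θ hθ hθ'
    rw [uIoc_of_le pi_div_two_pos.le] at hθ'
    have hcos : 0 < cos θ :=
      cos_pos_of_mem_Ioo ⟨by linarith [pi_pos, hθ'.1], lt_of_le_of_ne hθ'.2 hθ⟩
    have hcont : ContinuousAt (fun r : ℝ => √(1 - r ^ 2) * (1 / √(1 - r ^ 2 * sin θ ^ 2))) 1 := by
      refine ContinuousAt.mul (by fun_prop) (continuousAt_const.div (by fun_prop) ?_)
      rw [one_pow, one_mul, ← cos_sq']
      positivity
    simpa using hcont.tendsto.mono_left nhdsWithin_le_nhds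

lemma pi_div_two_le_K' {r : ℝ} (hr : r ∈ Ioo (0 : ℝ) 1) : π / 2 ≤ K' r :=
  pi_div_two_le_K (sq_lt_one_of_mem_Ioo (sqrt_one_sub_sq_mem_Ioo hr))

lemma pi_le_four_mul_E'_mul_K_sub_pi {r : ℝ} (hr : r ∈ Ioo (0 : ℝ) 1) :
    π ≤ 4 * E' r * K r - π := by
  have hK := pi_div_two_le_K (sq_lt_one_of_mem_Ioo hr)
  have hE' : 1 ≤ E' r := one_le_E (sq_lt_one_of_mem_Ioo (sqrt_one_sub_sq_mem_Ioo hr)).le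
  nlinarith [pi_pos]

lemma pi_mul_m (r : ℝ) : π * m r = 2 * (1 - r ^ 2) * K r * K' r := by
  simp only [m]
  field_simp

lemma m_nonneg {r : ℝ} (hr : r ∈ Ioo (0 : ℝ) 1) : 0 ≤ m r := by
  have hK := pi_div_two_le_K (sq_lt_one_of_mem_Ioo hr)
  have hK' := pi_div_two_le_K' hr
  have h1 := sub_nonneg.2 (sq_lt_one_of_mem_Ioo hr).le
  have := pi_pos
  exact mul_nonneg (mul_nonneg (mul_nonneg (by positivity) h1) (by linarith)) (by linarith)

lemma tendsto_K_nhdsGT_zero : Tendsto K (𝓝[>] 0) (𝓝 (π / 2)) :=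
  tendsto_K_nhds_zero.mono_left nhdsWithin_le_nhds

lemma tendsto_E_nhdsGT_zero : Tendsto E (𝓝[>] 0) (𝓝 (π / 2)) :=
  E_zero ▸ (continuous_E.tendsto 0).mono_left nhdsWithin_le_nhds

lemma tendsto_K'_nhdsGT_zero : Tendsto K' (𝓝[>] 0) atTop :=
  tendsto_K_nhdsLT_one.comp tendsto_sqrt_one_sub_sq_nhdsGT_zero

lemma tendsto_E'_nhdsGT_zero : Tendsto E' (𝓝[>] 0) (𝓝 1) :=
  E_one ▸ (continuous_E.tendsto 1).comp
    (tendsto_sqrt_one_sub_sq_nhdsGT_zero.mono_right nhdsWithin_le_nhds)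

lemma tendsto_mul_K'_nhdsGT_zero : Tendsto (fun r => r * K' r) (𝓝[>] 0) (𝓝 0) := by
  refine (tendsto_sqrt_one_sub_sq_mul_K.comp tendsto_sqrt_one_sub_sq_nhdsGT_zero).congr' ?_
  filter_upwards [Ioo_mem_nhdsGT one_pos] with r hr
  simp only [Function.comp_apply, sqrt_one_sub_sq_sqrt_one_sub_sq hr, K']

lemma tendsto_E_nhdsLT_one : Tendsto E (𝓝[<] 1) (𝓝 1) := by
  simpa [E_one] using (continuous_E.tendsto 1).mono_left nhdsWithin_le_nhds

lemma tendsto_K'_nhdsLT_one : Tendsto K' (𝓝[<] 1) (𝓝 (π / 2)) :=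
  tendsto_K_nhds_zero.comp (tendsto_sqrt_one_sub_sq_nhdsLT_one.mono_right nhdsWithin_le_nhds)

lemma tendsto_E'_nhdsLT_one : Tendsto E' (𝓝[<] 1) (𝓝 (π / 2)) :=
  E_zero ▸ (continuous_E.tendsto 0).comp
    (tendsto_sqrt_one_sub_sq_nhdsLT_one.mono_right nhdsWithin_le_nhds)

lemma tendsto_K'_mul_E_sub_K_nhdsGT_zero :
    Tendsto (fun r => K' r * (E r - K r)) (𝓝[>] 0) (𝓝 0) := by
  have hlow : Tendsto (fun r => -(r * K r * (r * K' r))) (𝓝[>] 0) (𝓝 0) := by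
    have hid : Tendsto (fun r : ℝ => r) (𝓝[>] 0) (𝓝 0) := tendsto_id.mono_left nhdsWithin_le_nhds
    simpa using ((hid.mul tendsto_K_nhdsGT_zero).mul tendsto_mul_K'_nhdsGT_zero).neg
  refine tendsto_of_tendsto_of_tendsto_of_le_of_le' hlow tendsto_const_nhds ?_ ?_ <;>
    filter_upwards [Ioo_mem_nhdsGT one_pos] with r hr
  · have hK' : 0 ≤ K' r := by linarith [pi_div_two_le_K' hr, pi_pos]
    nlinarith [mul_nonneg hK' (sub_nonneg.2 (one_sub_sq_mul_K_le_E (sq_lt_one_of_mem_Ioo hr)))]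
  · have hK' : 0 ≤ K' r := by linarith [pi_div_two_le_K' hr, pi_pos]
    exact mul_nonpos_of_nonneg_of_nonpos hK' (sub_nonpos.2 (E_le_K (sq_lt_one_of_mem_Ioo hr)))

lemma tendsto_H_nhdsGT_zero : Tendsto H (𝓝[>] 0) (𝓝 0) := by
  have hA : Tendsto (fun r => 4 * E' r * K r - π) (𝓝[>] 0) (𝓝 π) := by
    convert ((tendsto_E'_nhdsGT_zero.const_mul 4).mul tendsto_K_nhdsGT_zero).sub_const π using 2
    ring
  have h2K : Tendsto (fun r => 2 * (1 - r ^ 2) * K r) (𝓝[>] 0) (𝓝 π) := by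
    have hid : Tendsto (fun r : ℝ => r) (𝓝[>] 0) (𝓝 0) := tendsto_id.mono_left nhdsWithin_le_nhds
    convert (((hid.pow 2).const_sub 1).const_mul 2).mul tendsto_K_nhdsGT_zero using 2
    ring
  have hmA : Tendsto (fun r => π * m r / (4 * E' r * K r - π)) (𝓝[>] 0) atTop := by
    simp_rw [pi_mul_m, div_eq_mul_inv]
    exact (h2K.pos_mul_atTop pi_pos tendsto_K'_nhdsGT_zero).atTop_mul_pos (inv_pos.2 pi_pos)
      (hA.inv₀ pi_ne_zero)
  have hnum : Tendsto (fun r => K r * K' r * (E r * E' r + r ^ 2 * K r * K' r - K r * E' r))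
      (𝓝[>] 0) (𝓝 0) := by
    convert ((tendsto_K_nhdsGT_zero.mul tendsto_E'_nhdsGT_zero).mul
      tendsto_K'_mul_E_sub_K_nhdsGT_zero).add
      ((tendsto_K_nhdsGT_zero.pow 2).mul (tendsto_mul_K'_nhdsGT_zero.pow 2)) using 1
    · ext r; ring
    · simp
  have := ((tendsto_atTop_add_const_left _ 1 hmA).inv_tendsto_atTop).mul
    (((hnum.div (hA.pow 2) (by positivity)).const_mul 8).const_add 1)
  rw [zero_mul] at this
  exact this.congr fun r => by simp [H]

lemma tendsto_H_nhdsLT_one : Tendsto H (𝓝[<] 1) (𝓝 1) := by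
  have hA : Tendsto (fun r => 4 * E' r * K r - π) (𝓝[<] 1) atTop := by
    simpa only [← sub_eq_add_neg] using tendsto_atTop_add_const_right _ (-π)
      ((tendsto_E'_nhdsLT_one.const_mul 4).pos_mul_atTop (by positivity) tendsto_K_nhdsLT_one)
  have hmA : Tendsto (fun r => π * m r / (4 * E' r * K r - π)) (𝓝[<] 1) (𝓝 0) := by
    have hm : Tendsto (fun r => π * m r) (𝓝[<] 1) (𝓝 0) := by
      have hb := tendsto_sqrt_one_sub_sq_nhdsLT_one.mono_right nhdsWithin_le_nhds
      have h := ((hb.const_mul 2).mul tendsto_sqrt_one_sub_sq_mul_K).mul tendsto_K'_nhdsLT_one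
      simp only [mul_zero, zero_mul] at h
      refine h.congr' ?_
      filter_upwards [Ioo_mem_nhdsLT one_pos] with r hr
      have hsq := mul_self_sqrt (sub_nonneg.2 (sq_lt_one_of_mem_Ioo hr).le)
      rw [pi_mul_m]
      linear_combination (2 * K r * K' r) * hsq
    exact hm.div_atTop hA
  have hX : Tendsto (fun r => K r * K' r * (E r * E' r + r ^ 2 * K r * K' r - K r * E' r) /
      (4 * E' r * K r - π) ^ 2) (𝓝[<] 1) (𝓝 0) := by
    -- divide numerator and denominator by `K r ^ 2`
    have hKinv := tendsto_K_nhdsLT_one.inv_tendsto_atTop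
    have hid : Tendsto (fun r : ℝ => r) (𝓝[<] 1) (𝓝 1) := tendsto_id.mono_left nhdsWithin_le_nhds
    have h := (tendsto_K'_nhdsLT_one.mul (((tendsto_E_nhdsLT_one.mul tendsto_E'_nhdsLT_one).mul
      hKinv).add (((hid.pow 2).mul tendsto_K'_nhdsLT_one).sub tendsto_E'_nhdsLT_one))).div
      (((tendsto_E'_nhdsLT_one.const_mul 4).sub (hKinv.const_mul π)).pow 2) (by simp [pi_ne_zero])
    simp only [one_pow, one_mul, mul_zero, sub_self, zero_add, zero_div] at h
    refine h.congr' ?_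
    filter_upwards [Ioo_mem_nhdsLT one_pos] with r hr
    have hK : 0 < K r := by linarith [pi_div_two_le_K (sq_lt_one_of_mem_Ioo hr), pi_pos]
    simp only [Pi.div_apply, Pi.inv_apply]
    field_simp
    ring
  have := ((hmA.const_add 1).inv₀ (by norm_num)).mul ((hX.const_mul 8).const_add 1)
  simp only [add_zero, mul_zero, inv_one, mul_one] at this
  exact this.congr fun r => by simp [H]

lemma continuousOn_Icc_of_tendsto {α β : Type*} [TopologicalSpace α] [LinearOrder α]
    [OrderTopology α] [TopologicalSpace β] {f : α → β} {a b : α} (hab : a < b)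
    (hf : ContinuousOn f (Ioo a b)) (ha : Tendsto f (𝓝[>] a) (𝓝 (f a)))
    (hb : Tendsto f (𝓝[<] b) (𝓝 (f b))) : ContinuousOn f (Icc a b) := by
  intro x hx
  rcases eq_endpoints_or_mem_Ioo_of_mem_Icc hx with rfl | rfl | hx
  · exact (continuousWithinAt_Icc_iff_Ici hab).2 (continuousWithinAt_Ioi_iff_Ici.1 ha)
  · exact (continuousWithinAt_Icc_iff_Iic hab).2 (continuousWithinAt_Iio_iff_Iic.1 hb)
  · exact (hf.continuousAt (isOpen_Ioo.mem_nhds hx)).continuousWithinAt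

lemma continuousOn_K' : ContinuousOn K' (Ioo 0 1) :=
  continuousOn_K.comp (by fun_prop) fun _ hr =>
    Ioo_subset_Ioo_left (by norm_num) (sqrt_one_sub_sq_mem_Ioo hr)

lemma continuousOn_H : ContinuousOn H (Ioo 0 1) := by
  have hK : ContinuousOn K (Ioo 0 1) := continuousOn_K.mono (Ioo_subset_Ioo_left (by norm_num))
  have hK' := continuousOn_K'
  have hE : ContinuousOn E (Ioo 0 1) := continuous_E.continuousOn
  have hE' : ContinuousOn E' (Ioo 0 1) := (continuous_E.comp (by fun_prop)).continuousOn
  have hm : ContinuousOn m (Ioo 0 1) := by unfold m; fun_prop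
  have hA : ∀ r ∈ Ioo (0 : ℝ) 1, 4 * E' r * K r - π ≠ 0 := fun r hr =>
    (pi_pos.trans_le (pi_le_four_mul_E'_mul_K_sub_pi hr)).ne'
  have hA2 : ∀ r ∈ Ioo (0 : ℝ) 1, (4 * E' r * K r - π) ^ 2 ≠ 0 := fun r hr =>
    pow_ne_zero 2 (hA r hr)
  have hD : ∀ r ∈ Ioo (0 : ℝ) 1, 1 + π * m r / (4 * E' r * K r - π) ≠ 0 := fun r hr =>
    (add_pos_of_pos_of_nonneg one_pos (div_nonneg (mul_nonneg pi_pos.le (m_nonneg hr))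
      (pi_pos.le.trans (pi_le_four_mul_E'_mul_K_sub_pi hr)))).ne'
  unfold H
  fun_prop (disch := first | exact hA | exact hA2 | exact hD)

lemma eqOn_Hext_H : EqOn Hext H (Ioo 0 1) := fun _ hr => by
  simp only [Hext, if_neg hr.1.ne', if_neg hr.2.ne]

theorem stmt_18 :
    Filter.Tendsto H (nhdsWithin 0 (Set.Ioi (0:ℝ))) (nhds 0) ∧
    Filter.Tendsto H (nhdsWithin 1 (Set.Iio (1:ℝ))) (nhds 1) ∧
    ContinuousOn Hext (Set.Icc (0:ℝ) 1) := by
  refine ⟨tendsto_H_nhdsGT_zero, tendsto_H_nhdsLT_one,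
    continuousOn_Icc_of_tendsto one_pos (continuousOn_H.congr eqOn_Hext_H) ?_ ?_⟩
  · rw [show Hext 0 = 0 by simp [Hext]]
    exact tendsto_H_nhdsGT_zero.congr'
      (eventuallyEq_of_mem (Ioo_mem_nhdsGT one_pos) eqOn_Hext_H.symm)
  · rw [show Hext 1 = 1 by simp [Hext]]
    exact tendsto_H_nhdsLT_one.congr'
      (eventuallyEq_of_mem (Ioo_mem_nhdsLT one_pos) eqOn_Hext_H.symm)
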